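/- Let B be a one-dimensional distribution and let A be such that B = U_ρ A, the Ornstein–Uhlenbeck noising of A with parameter ρ = √δ, δ ∈ (0,1]. If every degree ≤ m' polynomial p with E_{N(0,1)}[p²] = 1 satisfies |E_{x~B}[p(x)] − E_{x~N(0,1)}[p(x)]| ≤ λ, then every degree ≤ m' polynomial p with E_{N(0,1)}[p²] = 1 satisfies |E_{x~A}[p(x)] − E_{x~N(0,1)}[p(x)]| ≤ √(m')·λ·δ^{-m'/2}. -/

import Mathlib

/-!
Expand `p = ∑ aᵢ hᵢ` in the normalized Hermite polynomials, which are orthonormal for `N(0,1)`,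
so that `∑ aᵢ² = 1` and `E_{N(0,1)}[p] = a₀`. Mehler's identity
`E_{W ~ N(0, 1 - ρ²)}[Heₙ(ρu + W)] = ρⁿ Heₙ(u)`, proved from Gaussian integration by parts and the
three-term recurrence, gives `E_B[hᵢ] = ρⁱ E_A[hᵢ]`. Testing the hypothesis on `hᵢ` thus bounds
`|E_A[hᵢ]| ≤ λ ρ^{-i} ≤ λ δ^{-m'/2}` for `1 ≤ i ≤ m'`, and Cauchy–Schwarz over these `m'`
coefficients gives the claim.
-/

open MeasureTheory ProbabilityTheory Polynomial
open scoped NNReal ENNReal Nat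

namespace Polynomial

theorem derivative_hermite_succ (n : ℕ) :
    derivative (hermite (n + 1)) = (n + 1 : ℤ[X]) * hermite n := by
  induction n with
  | zero => simp
  | succ n ih =>
    rw [hermite_succ (n + 1), derivative_sub, derivative_mul, derivative_X, ih, derivative_mul,
      hermite_succ n]
    simp only [derivative_add, derivative_natCast, derivative_one]
    push_cast
    ring

end Polynomial

noncomputable def realHermite (n : ℕ) : ℝ[X] := (hermite n).map (Int.castRingHom ℝ)

@[simp]
theorem realHermite_zero : realHermite 0 = 1 := by simp [realHermite]

theorem degree_realHermite (n : ℕ) : (realHermite n).degree = n := by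
  rw [realHermite, degree_map_eq_of_injective Int.cast_injective, degree_hermite]

theorem natDegree_realHermite (n : ℕ) : (realHermite n).natDegree = n := by
  rw [realHermite, natDegree_map_eq_of_injective Int.cast_injective, natDegree_hermite]

theorem realHermite_monic (n : ℕ) : (realHermite n).Monic := (hermite_monic n).map _

theorem realHermite_succ (n : ℕ) :
    realHermite (n + 1) = X * realHermite n - derivative (realHermite n) := by
  simp only [realHermite, hermite_succ, Polynomial.map_sub, Polynomial.map_mul, map_X,
    derivative_map]

theorem derivative_realHermite_succ (n : ℕ) :
    derivative (realHermite (n + 1)) = ((n : ℝ) + 1) • realHermite n := by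
  rw [realHermite, realHermite, derivative_map, derivative_hermite_succ, smul_eq_C_mul]
  simp

theorem realHermite_add_two (n : ℕ) :
    realHermite (n + 2) = X * realHermite (n + 1) - ((n : ℝ) + 1) • realHermite n := by
  rw [realHermite_succ (n + 1), derivative_realHermite_succ]

theorem iterate_derivative_realHermite_self (n : ℕ) :
    derivative^[n] (realHermite n) = C (n ! : ℝ) := by
  induction n with
  | zero => simp
  | succ n ih =>
    rw [Function.iterate_succ_apply, derivative_realHermite_succ, iterate_derivative_smul, ih,
      smul_eq_C_mul, ← C_mul, Nat.factorial_succ]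
    push_cast
    ring_nf

theorem exists_sum_smul_realHermite_eq {p : ℝ[X]} {m : ℕ} (hp : p.natDegree ≤ m) :
    ∃ c : ℕ → ℝ, ∑ i ∈ Finset.range (m + 1), c i • realHermite i = p := by
  let S : Polynomial.Sequence ℝ := ⟨realHermite, degree_realHermite⟩
  have hspan : p ∈ Submodule.span ℝ (S '' ↑(Finset.range (m + 1))) := by
    rw [Finset.coe_range,
      S.span_degreeLT fun i _ => by simp [S, (realHermite_monic i).leadingCoeff], mem_degreeLT]
    exact (degree_le_of_natDegree_le hp).trans_lt (by exact_mod_cast m.lt_succ_self)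
  exact (Submodule.mem_span_image_finset_iff_exists_fun' ℝ).mp hspan

noncomputable def normalizedHermite (n : ℕ) : ℝ[X] := (√(n ! : ℝ))⁻¹ • realHermite n

@[simp]
theorem normalizedHermite_zero : normalizedHermite 0 = 1 := by simp [normalizedHermite]

theorem natDegree_normalizedHermite (n : ℕ) : (normalizedHermite n).natDegree = n := by
  rw [normalizedHermite, natDegree_smul _ (by positivity), natDegree_realHermite]

theorem sqrt_factorial_smul_normalizedHermite (n : ℕ) :
    √(n ! : ℝ) • normalizedHermite n = realHermite n := by
  rw [normalizedHermite, smul_smul, mul_inv_cancel₀ (by positivity), one_smul]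

theorem exists_eq_sum_smul_normalizedHermite {p : ℝ[X]} {m : ℕ} (hp : p.natDegree ≤ m) :
    ∃ a : ℕ → ℝ, p = ∑ i ∈ Finset.range (m + 1), a i • normalizedHermite i := by
  obtain ⟨c, rfl⟩ := exists_sum_smul_realHermite_eq hp
  refine ⟨fun i => c i * √(i ! : ℝ), Finset.sum_congr rfl fun i _ => ?_⟩
  rw [mul_smul, sqrt_factorial_smul_normalizedHermite]

theorem integrable_eval_comp_of_memLp {α : Type*} [MeasurableSpace α] {μ : Measure α}
    [IsFiniteMeasure μ] {f : α → ℝ} {n : ℕ} (hf : MemLp f n μ) {q : ℝ[X]}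
    (hq : q.natDegree ≤ n) : Integrable (fun a => q.eval (f a)) μ := by
  simp_rw [eval_eq_sum_range' (Nat.lt_succ_of_le hq)]
  refine integrable_finsetSum _ fun i hi => Integrable.const_mul ?_ _
  have hin : (i : ℝ≥0∞) ≤ n := by
    exact_mod_cast Nat.lt_succ_iff.mp (Finset.mem_range.mp hi)
  refine (integrable_norm_iff (hf.aestronglyMeasurable.pow i)).mp ?_
  simpa only [Pi.pow_apply, norm_pow] using (hf.mono_exponent hin).integrable_norm_pow'

theorem memLp_id_of_integrable_pow {μ : Measure ℝ} {n : ℕ}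
    (h : Integrable (fun x : ℝ => x ^ n) μ) : MemLp id n μ := by
  rcases eq_or_ne n 0 with rfl | hn
  · simpa using aestronglyMeasurable_id
  rw [← integrable_norm_rpow_iff aestronglyMeasurable_id (by exact_mod_cast hn)
    (ENNReal.natCast_ne_top n)]
  simpa [Real.rpow_natCast] using h.norm

theorem integrable_eval_gaussianReal (μ : ℝ) (v : ℝ≥0) (q : ℝ[X]) :
    Integrable (fun x => q.eval x) (gaussianReal μ v) :=
  integrable_eval_comp_of_memLp (f := id) (by exact_mod_cast memLp_id_gaussianReal q.natDegree)
    le_rfl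

theorem integrable_gaussianPDFReal_mul_eval (μ : ℝ) {v : ℝ≥0} (hv : v ≠ 0) (q : ℝ[X]) :
    Integrable (fun x => gaussianPDFReal μ v x * q.eval x) := by
  have h := integrable_eval_gaussianReal μ v q
  rw [gaussianReal_of_var_ne_zero μ hv, integrable_withDensity_iff_integrable_smul'
    (measurable_gaussianPDF μ v) (ae_of_all _ fun _ => gaussianPDF_lt_top)] at h
  simpa using h

theorem hasDerivAt_gaussianPDFReal (μ : ℝ) (v : ℝ≥0) (x : ℝ) :
    HasDerivAt (gaussianPDFReal μ v) (-((x - μ) / v) * gaussianPDFReal μ v x) x := by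
  have h : HasDerivAt (fun y => -(y - μ) ^ 2 / (2 * v)) (-(2 * (x - μ)) / (2 * v)) x := by
    simpa using (((hasDerivAt_id x).sub_const μ).pow 2).neg.div_const (2 * (v : ℝ))
  rw [gaussianPDFReal_def]
  exact (h.exp.const_mul _).congr_deriv (by ring)

noncomputable def gaussianExpectation (v : ℝ≥0) : ℝ[X] →ₗ[ℝ] ℝ where
  toFun p := ∫ x, p.eval x ∂gaussianReal 0 v
  map_add' p q := by
    simpa only [eval_add] using integral_add (integrable_eval_gaussianReal 0 v p)
      (integrable_eval_gaussianReal 0 v q)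
  map_smul' c p := by
    simpa only [eval_smul, smul_eq_mul, RingHom.id_apply] using integral_const_mul c _

theorem gaussianExpectation_apply (v : ℝ≥0) (p : ℝ[X]) :
    gaussianExpectation v p = ∫ x, p.eval x ∂gaussianReal 0 v := rfl

theorem gaussianExpectation_C (v : ℝ≥0) (a : ℝ) : gaussianExpectation v (C a) = a := by
  simp [gaussianExpectation_apply]

-- Gaussian integration by parts: `∫ (φ q)' = 0` for the density `φ`, as `φ q` is integrable.
theorem gaussianExpectation_X_mul (v : ℝ≥0) (q : ℝ[X]) :
    gaussianExpectation v (X * q) = v * gaussianExpectation v (derivative q) := by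
  rcases eq_or_ne v 0 with rfl | hv
  · simp [gaussianExpectation_apply]
  have hderiv : ∀ x, HasDerivAt (fun y => gaussianPDFReal 0 v y * q.eval y)
      (gaussianPDFReal 0 v x • (derivative q - (v : ℝ)⁻¹ • (X * q)).eval x) x := fun x => by
    refine ((hasDerivAt_gaussianPDFReal 0 v x).mul (q.hasDerivAt x)).congr_deriv ?_
    simp only [eval_sub, eval_smul, eval_mul, eval_X, smul_eq_mul, sub_zero]
    ring
  have hzero := integral_eq_zero_of_hasDerivAt_of_integrable hderiv
    (integrable_gaussianPDFReal_mul_eval 0 hv _) (integrable_gaussianPDFReal_mul_eval 0 hv q)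
  rw [← integral_gaussianReal_eq_integral_smul hv, ← gaussianExpectation_apply,
    map_sub, map_smul, smul_eq_mul, sub_eq_zero] at hzero
  rw [hzero]
  field_simp

theorem gaussianExpectation_X (v : ℝ≥0) : gaussianExpectation v X = 0 := by
  simpa using gaussianExpectation_X_mul v 1

theorem gaussianExpectation_realHermite_mul (n : ℕ) (q : ℝ[X]) :
    gaussianExpectation 1 (realHermite n * q) = gaussianExpectation 1 (derivative^[n] q) := by
  induction n generalizing q with
  | zero => simp
  | succ n ih =>
    have hstep : realHermite (n + 1) * q
        = X * (realHermite n * q) - derivative (realHermite n) * q := by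
      rw [realHermite_succ]
      ring
    rw [hstep, map_sub, gaussianExpectation_X_mul, derivative_mul, map_add, NNReal.coe_one,
      one_mul, add_sub_cancel_left, ih, Function.iterate_succ_apply]

theorem gaussianExpectation_realHermite_mul_realHermite (m n : ℕ) :
    gaussianExpectation 1 (realHermite m * realHermite n) = if m = n then (m ! : ℝ) else 0 := by
  rcases lt_trichotomy m n with h | rfl | h
  · rw [if_neg h.ne, mul_comm, gaussianExpectation_realHermite_mul,
      iterate_derivative_eq_zero (by rwa [natDegree_realHermite]), map_zero]
  · rw [if_pos rfl, gaussianExpectation_realHermite_mul, iterate_derivative_realHermite_self,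
      gaussianExpectation_C]
  · rw [if_neg h.ne', gaussianExpectation_realHermite_mul,
      iterate_derivative_eq_zero (by rwa [natDegree_realHermite]), map_zero]

theorem gaussianExpectation_normalizedHermite_mul_normalizedHermite (m n : ℕ) :
    gaussianExpectation 1 (normalizedHermite m * normalizedHermite n)
      = if m = n then 1 else 0 := by
  rw [normalizedHermite, normalizedHermite, smul_mul_smul, map_smul,
    gaussianExpectation_realHermite_mul_realHermite, smul_eq_mul]
  split_ifs with h
  · subst h
    rw [← mul_inv, Real.mul_self_sqrt (by positivity), inv_mul_cancel₀ (by positivity)]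
  · rw [mul_zero]

theorem integral_normalizedHermite_gaussianReal {n : ℕ} (hn : n ≠ 0) :
    ∫ x, (normalizedHermite n).eval x ∂gaussianReal 0 1 = 0 := by
  simpa [hn, gaussianExpectation_apply] using
    gaussianExpectation_normalizedHermite_mul_normalizedHermite n 0

theorem integral_eval_sq_gaussianReal (v : ℝ≥0) (q : ℝ[X]) :
    ∫ x, q.eval x ^ 2 ∂gaussianReal 0 v = gaussianExpectation v (q * q) := by
  simp [gaussianExpectation_apply, sq]

theorem integral_normalizedHermite_sq_gaussianReal (n : ℕ) :
    ∫ x, (normalizedHermite n).eval x ^ 2 ∂gaussianReal 0 1 = 1 := by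
  rw [integral_eval_sq_gaussianReal, gaussianExpectation_normalizedHermite_mul_normalizedHermite,
    if_pos rfl]

theorem integral_sum_smul_normalizedHermite_sq_gaussianReal (s : Finset ℕ) (a : ℕ → ℝ) :
    ∫ x, (∑ i ∈ s, a i • normalizedHermite i).eval x ^ 2 ∂gaussianReal 0 1
      = ∑ i ∈ s, a i ^ 2 := by
  rw [integral_eval_sq_gaussianReal]
  simp only [Finset.sum_mul_sum, smul_mul_smul, map_sum, map_smul,
    gaussianExpectation_normalizedHermite_mul_normalizedHermite, smul_eq_mul, mul_ite, mul_zero,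
    mul_one, Finset.sum_ite_eq, sq]
  exact Finset.sum_congr rfl fun i hi => if_pos hi

theorem gaussianExpectation_realHermite_comp {ρ : ℝ} {v : ℝ≥0} (hv : (v : ℝ) = 1 - ρ ^ 2)
    (u : ℝ) (n : ℕ) :
    gaussianExpectation v ((realHermite n).comp (C (ρ * u) + X))
      = ρ ^ n * (realHermite n).eval u := by
  set L : ℝ[X] := C (ρ * u) + X
  induction n using Nat.twoStepInduction with
  | zero => simpa using gaussianExpectation_C v 1
  | one =>
    simp only [realHermite, hermite_one, Polynomial.map_X, X_comp, L, map_add,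
      gaussianExpectation_C, gaussianExpectation_X, eval_X, pow_one, add_zero]
  | more n ih₀ ih₁ =>
    have hL : derivative ((realHermite (n + 1)).comp L)
        = ((n : ℝ) + 1) • (realHermite n).comp L := by
      simp [L, derivative_comp, derivative_realHermite_succ]
    rw [realHermite_add_two, sub_comp, mul_comp, X_comp, smul_comp, add_mul, ← smul_eq_C_mul,
      map_sub, map_add, map_smul, gaussianExpectation_X_mul, hL, map_smul, ih₀, ih₁, hv]
    simp only [eval_sub, eval_mul, eval_X, eval_smul, smul_eq_mul]
    ring

theorem gaussianExpectation_normalizedHermite_comp {ρ : ℝ} {v : ℝ≥0}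
    (hv : (v : ℝ) = 1 - ρ ^ 2) (u : ℝ) (n : ℕ) :
    gaussianExpectation v ((normalizedHermite n).comp (C (ρ * u) + X))
      = ρ ^ n * (normalizedHermite n).eval u := by
  rw [normalizedHermite, smul_comp, map_smul, gaussianExpectation_realHermite_comp hv, eval_smul,
    smul_eq_mul, smul_eq_mul, mul_left_comm]

theorem conv_map_const_mul_eq_map_prod (A ν : Measure ℝ) [SFinite A] [SFinite ν] (ρ : ℝ) :
    Measure.conv (A.map (ρ * ·)) ν = (A.prod ν).map fun z => ρ * z.1 + z.2 := by
  have hρ : Measurable (ρ * · : ℝ → ℝ) := measurable_const_mul ρ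
  have hprod : (A.map (ρ * ·)).prod ν = (A.prod ν).map (Prod.map (ρ * ·) id) := by
    simpa using Measure.map_prod_map A ν hρ measurable_id
  rw [Measure.conv, hprod, Measure.map_map (by fun_prop) (hρ.prodMap measurable_id)]
  rfl

theorem integral_eval_conv_map_mul_gaussianReal (A : Measure ℝ) [IsProbabilityMeasure A]
    {n : ℕ} (hA : MemLp id n A) (ρ : ℝ) (v : ℝ≥0) {q : ℝ[X]} (hq : q.natDegree ≤ n) :
    ∫ y, q.eval y ∂(Measure.conv (A.map (ρ * ·)) (gaussianReal 0 v))
      = ∫ x, gaussianExpectation v (q.comp (C (ρ * x) + X)) ∂A := by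
  have hmeas : Measurable fun z : ℝ × ℝ => ρ * z.1 + z.2 := by fun_prop
  have hint : Integrable (fun z : ℝ × ℝ => q.eval (ρ * z.1 + z.2)) (A.prod (gaussianReal 0 v)) :=
    integrable_eval_comp_of_memLp
      (((hA.comp_measurePreserving measurePreserving_fst).const_mul ρ).add
        ((memLp_id_gaussianReal' _ (ENNReal.natCast_ne_top n)).comp_measurePreserving
          measurePreserving_snd)) hq
  rw [conv_map_const_mul_eq_map_prod, integral_map hmeas.aemeasurable
    q.continuous.aestronglyMeasurable, integral_prod _ hint]
  simp [gaussianExpectation_apply, eval_comp]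

theorem integral_normalizedHermite_conv_map_mul_gaussianReal (A : Measure ℝ)
    [IsProbabilityMeasure A] {n : ℕ} (hA : MemLp id n A) {ρ : ℝ} {v : ℝ≥0}
    (hv : (v : ℝ) = 1 - ρ ^ 2) {k : ℕ} (hk : k ≤ n) :
    ∫ y, (normalizedHermite k).eval y ∂(Measure.conv (A.map (ρ * ·)) (gaussianReal 0 v))
      = ρ ^ k * ∫ x, (normalizedHermite k).eval x ∂A := by
  rw [integral_eval_conv_map_mul_gaussianReal A hA ρ v (by rwa [natDegree_normalizedHermite]),
    ← integral_const_mul]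
  simp_rw [gaussianExpectation_normalizedHermite_comp hv]

theorem integral_eval_sum_smul {ι : Type*} {μ : Measure ℝ} {s : Finset ι} (a : ι → ℝ)
    {f : ι → ℝ[X]} (hf : ∀ i ∈ s, Integrable (fun x => (f i).eval x) μ) :
    ∫ x, (∑ i ∈ s, a i • f i).eval x ∂μ = ∑ i ∈ s, a i * ∫ x, (f i).eval x ∂μ := by
  simp only [eval_finsetSum, eval_smul, smul_eq_mul]
  rw [integral_finsetSum _ fun i hi => (hf i hi).const_mul (a i)]
  simp_rw [integral_const_mul]

theorem integral_sum_smul_normalizedHermite_sub_gaussianReal (A : Measure ℝ)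
    [IsProbabilityMeasure A] {m : ℕ} (hA : MemLp id m A) (a : ℕ → ℝ) :
    ∫ x, (∑ i ∈ Finset.range (m + 1), a i • normalizedHermite i).eval x ∂A
      - ∫ x, (∑ i ∈ Finset.range (m + 1), a i • normalizedHermite i).eval x ∂gaussianReal 0 1
      = ∑ i ∈ Finset.range m, a (i + 1) * ∫ x, (normalizedHermite (i + 1)).eval x ∂A := by
  rw [integral_eval_sum_smul a fun i hi => integrable_eval_comp_of_memLp (f := id) hA
      (by rw [natDegree_normalizedHermite]; exact Nat.lt_succ_iff.mp (Finset.mem_range.mp hi)),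
    integral_eval_sum_smul a fun i _ => integrable_eval_gaussianReal 0 1 _,
    ← Finset.sum_sub_distrib, Finset.sum_range_succ']
  simp [integral_normalizedHermite_gaussianReal]

theorem abs_sum_mul_le_sqrt_card_mul {ι : Type*} (s : Finset ι) {a b : ι → ℝ} {M : ℝ}
    (ha : ∑ i ∈ s, a i ^ 2 ≤ 1) (hb : ∀ i ∈ s, |b i| ≤ M) :
    |∑ i ∈ s, a i * b i| ≤ √(s.card : ℝ) * M := by
  rcases s.eq_empty_or_nonempty with rfl | ⟨j, hj⟩
  · simp
  have hM : 0 ≤ M := (abs_nonneg _).trans (hb j hj)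
  refine abs_le_of_sq_le_sq ?_ (by positivity)
  calc (∑ i ∈ s, a i * b i) ^ 2 ≤ (∑ i ∈ s, a i ^ 2) * ∑ i ∈ s, b i ^ 2 :=
        Finset.sum_mul_sq_le_sq_mul_sq s a b
    _ ≤ 1 * ∑ _i ∈ s, M ^ 2 :=
        mul_le_mul ha (Finset.sum_le_sum fun i hi => sq_le_sq' (abs_le.mp (hb i hi)).1
          (abs_le.mp (hb i hi)).2) (Finset.sum_nonneg fun i _ => sq_nonneg _) zero_le_one
    _ = (√(s.card : ℝ) * M) ^ 2 := by
        rw [mul_pow, Real.sq_sqrt (Nat.cast_nonneg _), Finset.sum_const, nsmul_eq_mul, one_mul]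

theorem abs_le_mul_rpow_of_abs_sqrt_pow_mul_le {δ x c : ℝ} (hδ0 : 0 < δ) (hδ1 : δ ≤ 1)
    {k n : ℕ} (hkn : k ≤ n) (h : |√δ ^ k * x| ≤ c) : |x| ≤ c * δ ^ (-(n : ℝ) / 2) := by
  have hpow : √δ ^ k = δ ^ ((k : ℝ) / 2) := by
    rw [Real.sqrt_eq_rpow, ← Real.rpow_natCast, ← Real.rpow_mul hδ0.le]
    ring_nf
  have hkn' : (k : ℝ) ≤ n := by exact_mod_cast hkn
  calc |x| = δ ^ (-(k : ℝ) / 2) * |√δ ^ k * x| := by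
        rw [abs_mul, hpow, abs_of_pos (Real.rpow_pos_of_pos hδ0 _), ← mul_assoc,
          ← Real.rpow_add hδ0]
        ring_nf
        simp
    _ ≤ δ ^ (-(n : ℝ) / 2) * c :=
        mul_le_mul (Real.rpow_le_rpow_of_exponent_ge hδ0 hδ1 (by linarith)) h
          (abs_nonneg _) (by positivity)
    _ = c * δ ^ (-(n : ℝ) / 2) := mul_comm _ _

/-- Moment-matching transfer through the Ornstein–Uhlenbeck operator: if
`B = U_{√δ} A` approximately matches unit-norm polynomials of degree `≤ m'` with error
`lam`, then `A` matches them with error `√(m') · lam · δ^{-m'/2}`. -/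
theorem ou_moment_transfer (δ : ℝ) (hδ0 : 0 < δ) (hδ1 : δ ≤ 1) (m' : ℕ) (lam : ℝ)
    (A : Measure ℝ) [IsProbabilityMeasure A]
    (hint : ∀ i : ℕ, i ≤ m' → Integrable (fun x => x ^ i) A)
    (B : Measure ℝ)
    (hB : B = Measure.conv (A.map fun x => Real.sqrt δ * x)
      (gaussianReal 0 (Real.toNNReal (1 - δ))))
    (hmatch : ∀ p : Polynomial ℝ, p.natDegree ≤ m' →
      (∫ x, (p.eval x) ^ 2 ∂(gaussianReal 0 1)) = 1 →
      |(∫ x, p.eval x ∂B) - ∫ x, p.eval x ∂(gaussianReal 0 1)| ≤ lam) :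
    ∀ p : Polynomial ℝ, p.natDegree ≤ m' →
      (∫ x, (p.eval x) ^ 2 ∂(gaussianReal 0 1)) = 1 →
      |(∫ x, p.eval x ∂A) - ∫ x, p.eval x ∂(gaussianReal 0 1)| ≤
        Real.sqrt m' * lam * δ ^ (-(m' : ℝ) / 2) := by
  intro p hdeg hnorm
  have hv : ((1 - δ).toNNReal : ℝ) = 1 - √δ ^ 2 := by
    rw [Real.sq_sqrt hδ0.le, Real.coe_toNNReal _ (by linarith)]
  have hA : MemLp id m' A := memLp_id_of_integrable_pow (hint m' le_rfl)
  obtain ⟨a, rfl⟩ := exists_eq_sum_smul_normalizedHermite hdeg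
  have ha : ∑ i ∈ Finset.range m', a (i + 1) ^ 2 ≤ 1 := by
    rw [integral_sum_smul_normalizedHermite_sq_gaussianReal, Finset.sum_range_succ'] at hnorm
    linarith [sq_nonneg (a 0)]
  have hmoment : ∀ i ∈ Finset.range m',
      |∫ x, (normalizedHermite (i + 1)).eval x ∂A| ≤ lam * δ ^ (-(m' : ℝ) / 2) := by
    intro i hi
    have him : i + 1 ≤ m' := Finset.mem_range.mp hi
    have h := hmatch (normalizedHermite (i + 1)) (by rwa [natDegree_normalizedHermite])
      (integral_normalizedHermite_sq_gaussianReal _)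
    rw [hB, integral_normalizedHermite_conv_map_mul_gaussianReal A hA hv him,
      integral_normalizedHermite_gaussianReal i.succ_ne_zero, sub_zero] at h
    exact abs_le_mul_rpow_of_abs_sqrt_pow_mul_le hδ0 hδ1 him h
  rw [integral_sum_smul_normalizedHermite_sub_gaussianReal A hA, mul_assoc]
  simpa using abs_sum_mul_le_sqrt_card_mul (Finset.range m') ha hmoment
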